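/- arXiv:math/0511046 — 2 statements merged into one kernel-verified Lean document; each statement's English description precedes it below -/
import Mathlib

section
/- Every antichain of monomial submodules of the free module M = ⊕_{i=1}^r S·e_i over the polynomial ring S = ℂ[x₁,…,xₙ] is finite; that is, if ℰ is a set of monomial submodules of M such that for any two distinct members N₁, N₂ ∈ ℰ one has N₁ ⊄ N₂, then ℰ is a finite set. -/
open Set

namespace AntichainAux

/-! ### Infinite Ramsey theory (pairs and triples) -/

variable {C : Type*}

theorem exists_col [Finite C] (c : ℕ → ℕ → C) (S : Set ℕ) (hS : S.Infinite) (a : ℕ) :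
    ∃ col, {y | y ∈ S ∧ a < y ∧ c a y = col}.Infinite := by
  by_contra h
  push_neg at h
  have h1 : {y | y ∈ S ∧ a < y} ⊆ ⋃ col : C, {y | y ∈ S ∧ a < y ∧ c a y = col} := fun y hy =>
    Set.mem_iUnion.2 ⟨c a y, hy.1, hy.2, rfl⟩
  have h2 : S ⊆ {y | y ∈ S ∧ a < y} ∪ {y | y ≤ a} := fun y hy => by
    rcases lt_or_ge a y with h' | h'
    · exact Or.inl ⟨hy, h'⟩
    · exact Or.inr h'
  exact hS ((((Set.finite_iUnion h).subset h1).union (Set.finite_le_nat a)).subset h2)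

theorem ramsey_pairs [Finite C] (c : ℕ → ℕ → C) :
    ∃ g : ℕ → ℕ, StrictMono g ∧ ∃ a : C, ∀ i j, i < j → c (g i) (g j) = a := by
  classical
  let Inv : ℕ × Set ℕ → Prop := fun p =>
    p.2.Infinite ∧ (∀ y ∈ p.2, p.1 < y) ∧ ∀ y ∈ p.2, ∀ z ∈ p.2, c p.1 y = c p.1 z
  have step : ∀ p, Inv p → ∃ q, Inv q ∧ q.1 ∈ p.2 ∧ q.2 ⊆ p.2 := by
    rintro ⟨a, S⟩ ⟨hinf, _, _⟩
    obtain ⟨a', ha'⟩ := hinf.nonempty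
    obtain ⟨col, hcol⟩ := exists_col c S hinf a'
    exact ⟨(a', {y | y ∈ S ∧ a' < y ∧ c a' y = col}),
      ⟨hcol, fun y hy => hy.2.1, fun y hy z hz => hy.2.2.trans hz.2.2.symm⟩,
      ha', fun y hy => hy.1⟩
  have start : ∃ p, Inv p := by
    obtain ⟨col, hcol⟩ := exists_col c Set.univ Set.infinite_univ 0
    exact ⟨(0, {y | y ∈ Set.univ ∧ 0 < y ∧ c 0 y = col}),
      hcol, fun y hy => hy.2.1, fun y hy z hz => hy.2.2.trans hz.2.2.symm⟩
  choose stepf hstep1 hstep2 hstep3 using step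
  obtain ⟨p0, hp0⟩ := start
  let F : ℕ → {p : ℕ × Set ℕ // Inv p} := fun k =>
    Nat.rec ⟨p0, hp0⟩ (fun _ q => ⟨stepf q.1 q.2, hstep1 q.1 q.2⟩) k
  have hFsucc : ∀ k, (F (k + 1)).1 = stepf (F k).1 (F k).2 := fun k => rfl
  set A : ℕ → ℕ := fun k => (F k).1.1 with hA
  set S : ℕ → Set ℕ := fun k => (F k).1.2 with hSdef
  have hmem : ∀ k, A (k + 1) ∈ S k := fun k => hstep2 (F k).1 (F k).2
  have hsub : ∀ k, S (k + 1) ⊆ S k := fun k => hstep3 (F k).1 (F k).2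
  have hchain : ∀ i j, i ≤ j → S j ⊆ S i := by
    intro i j hij
    induction j with
    | zero => cases Nat.le_zero.mp hij; exact fun x h => h
    | succ k ih =>
      rcases Nat.lt_or_ge i (k + 1) with h | h
      · exact fun x hx => ih (Nat.lt_succ_iff.mp h) (hsub k hx)
      · cases Nat.le_antisymm hij h; exact fun x h => h
  have hAmono : StrictMono A := by
    apply strictMono_nat_of_lt_succ
    intro k
    exact (F k).2.2.1 _ (hmem k)
  have hmemS : ∀ i j, i < j → A j ∈ S i := by
    intro i j hij
    obtain ⟨m, rfl⟩ := Nat.exists_eq_add_of_lt hij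
    exact hchain i (i + m) (Nat.le_add_right _ _) (hmem (i + m))
  have hconst : ∀ i j, i < j → c (A i) (A j) = c (A i) (A (i + 1)) := fun i j hij =>
    (F i).2.2.2 _ (hmemS i j hij) _ (hmem i)
  set D : ℕ → C := fun i => c (A i) (A (i + 1)) with hD
  obtain ⟨col, hcol⟩ := Finite.exists_infinite_fiber D
  have hinf : (setOf (fun k => D k = col)).Infinite := Set.infinite_coe_iff.mp hcol
  refine ⟨A ∘ Nat.nth (fun k => D k = col), hAmono.comp (Nat.nth_strictMono hinf), col, ?_⟩
  intro i j hij
  have := hconst (Nat.nth _ i) (Nat.nth _ j) (Nat.nth_strictMono hinf hij)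
  simpa [this] using Nat.nth_mem_of_infinite hinf i

theorem ramsey_triples [Finite C] (c : ℕ → ℕ → ℕ → C) :
    ∃ g : ℕ → ℕ, StrictMono g ∧ ∃ a : C, ∀ i j k, i < j → j < k → c (g i) (g j) (g k) = a := by
  classical
  let Inv : ℕ × (ℕ → ℕ) → Prop := fun p =>
    StrictMono p.2 ∧ (∀ k, p.1 < p.2 k) ∧
      ∀ s t, s < t → c p.1 (p.2 s) (p.2 t) = c p.1 (p.2 0) (p.2 1)
  have step : ∀ p, Inv p → ∃ q, Inv q ∧ q.1 = p.2 0 ∧ Set.range q.2 ⊆ Set.range p.2 := by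
    rintro ⟨a, e⟩ ⟨hmono, _, _⟩
    obtain ⟨g', hg', col, hcol⟩ := ramsey_pairs (fun i j => c (e 0) (e i) (e j))
    refine ⟨(e 0, fun k => e (g' (k + 1))), ⟨?_, ?_, ?_⟩, rfl, ?_⟩
    · exact hmono.comp (hg'.comp (fun _ _ h => Nat.succ_lt_succ h))
    · intro k
      exact hmono (lt_of_lt_of_le (Nat.succ_pos k) hg'.le_apply)
    · intro s t hst
      show c (e 0) (e (g' (s + 1))) (e (g' (t + 1))) =
        c (e 0) (e (g' (0 + 1))) (e (g' (1 + 1)))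
      rw [hcol _ _ (Nat.succ_lt_succ hst), hcol _ _ (Nat.succ_lt_succ Nat.zero_lt_one)]
    · rintro _ ⟨k, rfl⟩
      exact ⟨_, rfl⟩
  have start : ∃ p, Inv p := by
    obtain ⟨g', hg', col, hcol⟩ := ramsey_pairs (fun i j => c 0 (i + 1) (j + 1))
    refine ⟨(0, fun k => g' k + 1), ⟨fun _ _ h => Nat.succ_lt_succ (hg' h), fun k => Nat.succ_pos _, ?_⟩⟩
    intro s t hst
    rw [hcol _ _ hst, hcol _ _ Nat.zero_lt_one]
  choose stepf hstep1 hstep2 hstep3 using step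
  obtain ⟨p0, hp0⟩ := start
  let F : ℕ → {p : ℕ × (ℕ → ℕ) // Inv p} := fun k =>
    Nat.rec ⟨p0, hp0⟩ (fun _ q => ⟨stepf q.1 q.2, hstep1 q.1 q.2⟩) k
  set A : ℕ → ℕ := fun k => (F k).1.1 with hA
  set E : ℕ → ℕ → ℕ := fun k => (F k).1.2 with hE
  have hmem : ∀ k, A (k + 1) = E k 0 := fun k => hstep2 (F k).1 (F k).2
  have hsub : ∀ k, Set.range (E (k + 1)) ⊆ Set.range (E k) := fun k => hstep3 (F k).1 (F k).2
  have hchain : ∀ i j, i ≤ j → Set.range (E j) ⊆ Set.range (E i) := by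
    intro i j hij
    induction j with
    | zero => cases Nat.le_zero.mp hij; exact fun x h => h
    | succ k ih =>
      rcases Nat.lt_or_ge i (k + 1) with h | h
      · exact fun x hx => ih (Nat.lt_succ_iff.mp h) (hsub k hx)
      · cases Nat.le_antisymm hij h; exact fun x h => h
  have hgt : ∀ k y, y ∈ Set.range (E k) → A k < y := by
    rintro k y ⟨s, rfl⟩
    exact (F k).2.2.1 s
  have hAmono : StrictMono A := by
    apply strictMono_nat_of_lt_succ
    intro k
    rw [hmem k]
    exact (F k).2.2.1 0
  have hmemS : ∀ i j, i < j → A j ∈ Set.range (E i) := by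
    intro i j hij
    obtain ⟨m, rfl⟩ := Nat.exists_eq_add_of_lt hij
    rw [hmem (i + m)]
    exact hchain i (i + m) (Nat.le_add_right _ _) ⟨0, rfl⟩
  have hconst : ∀ i j k, i < j → j < k →
      c (A i) (A j) (A k) = c (A i) (E i 0) (E i 1) := by
    intro i j k hij hjk
    obtain ⟨s, hs⟩ := hmemS i j hij
    obtain ⟨t, ht⟩ := hmemS i k (hij.trans hjk)
    have hst : s < t := by
      have := hAmono hjk
      rw [← hs, ← ht] at this
      exact (F i).2.1.lt_iff_lt.mp this
    rw [← hs, ← ht]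
    exact (F i).2.2.2 s t hst
  set D : ℕ → C := fun i => c (A i) (E i 0) (E i 1) with hD
  obtain ⟨col, hcol⟩ := Finite.exists_infinite_fiber D
  have hinf : (setOf (fun k => D k = col)).Infinite := Set.infinite_coe_iff.mp hcol
  refine ⟨A ∘ Nat.nth (fun k => D k = col), hAmono.comp (Nat.nth_strictMono hinf), col, ?_⟩
  intro i j k hij hjk
  have := hconst (Nat.nth _ i) (Nat.nth _ j) (Nat.nth _ k)
    (Nat.nth_strictMono hinf hij) (Nat.nth_strictMono hinf hjk)
  simpa [this] using Nat.nth_mem_of_infinite hinf i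

/-! ### "2-perfect" quasi-orders -/

def Perf {Q : Type*} (R : Q → Q → Prop) : Prop :=
  ∀ f : ℕ → ℕ → Q, ∃ g : ℕ → ℕ, StrictMono g ∧
    ∀ i j k : ℕ, i < j → j < k → R (f (g i) (g j)) (f (g j) (g k))

theorem perf_nat : Perf ((· ≤ ·) : ℕ → ℕ → Prop) := by
  intro f
  obtain ⟨g, hg, a, ha⟩ := ramsey_triples (fun x y z => decide (f x y ≤ f y z))
  cases a with
  | true => exact ⟨g, hg, fun i j k hij hjk => of_decide_eq_true (ha i j k hij hjk)⟩
  | false =>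
    exfalso
    have hdec : ∀ m : ℕ, f (g (m + 1)) (g (m + 1 + 1)) < f (g m) (g (m + 1)) := fun m =>
      not_le.mp (of_decide_eq_false (ha m (m + 1) (m + 1 + 1) (by omega) (by omega)))
    have hge : ∀ m, f (g m) (g (m + 1)) + m ≤ f (g 0) (g (0 + 1)) := by
      intro m
      induction m with
      | zero => omega
      | succ k ih => have := hdec k; omega
    have := hge (f (g 0) (g (0 + 1)) + 1)
    omega

theorem perf_eq {Q : Type*} [Finite Q] : Perf ((· = ·) : Q → Q → Prop) := by
  intro f
  obtain ⟨g, hg, a, ha⟩ := ramsey_pairs f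
  exact ⟨g, hg, fun i j k hij hjk => (ha _ _ hij).trans (ha _ _ hjk).symm⟩

theorem Perf.prod {Q₁ Q₂ : Type*} {R₁ : Q₁ → Q₁ → Prop} {R₂ : Q₂ → Q₂ → Prop}
    (h₁ : Perf R₁) (h₂ : Perf R₂) :
    Perf (fun (a b : Q₁ × Q₂) => R₁ a.1 b.1 ∧ R₂ a.2 b.2) := by
  intro f
  obtain ⟨g₁, hg₁, h1⟩ := h₁ (fun i j => (f i j).1)
  obtain ⟨g₂, hg₂, h2⟩ := h₂ (fun i j => (f (g₁ i) (g₁ j)).2)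
  exact ⟨g₁ ∘ g₂, hg₁.comp hg₂, fun i j k hij hjk =>
    ⟨h1 _ _ _ (hg₂ hij) (hg₂ hjk), h2 i j k hij hjk⟩⟩

theorem Perf.mono {Q : Type*} {R R' : Q → Q → Prop} (h : Perf R)
    (hRR : ∀ a b, R a b → R' a b) : Perf R' := by
  intro f
  obtain ⟨g, hg, hgood⟩ := h f
  exact ⟨g, hg, fun i j k hij hjk => hRR _ _ (hgood i j k hij hjk)⟩

theorem Perf.comap {Q Q' : Type*} {R : Q → Q → Prop} (hp : Perf R) (h : Q' → Q) :
    Perf (fun a b => R (h a) (h b)) := fun f => hp (fun i j => h (f i j))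

theorem perf_fn : ∀ m : ℕ, Perf (fun (a b : Fin m → ℕ) => ∀ i, a i ≤ b i)
  | 0 => fun f => ⟨id, strictMono_id, fun i j k _ _ x => x.elim0⟩
  | (m + 1) => by
    have h := (perf_nat.prod (perf_fn m)).comap
      (fun v : Fin (m + 1) → ℕ => (v 0, v ∘ Fin.succ))
    refine h.mono ?_
    rintro a b ⟨h0, hs⟩ i
    refine Fin.cases ?_ ?_ i
    · exact h0
    · exact hs

/-! ### The combinatorial key for the main theorem -/

theorem perf_main (n r : ℕ) :
    Perf (fun (p q : (Fin n →₀ ℕ) × Fin r) => p.2 = q.2 ∧ p.1 ≤ q.1) := by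
  have h1 : Perf (fun (a b : Fin n →₀ ℕ) => a ≤ b) := by
    have h := (perf_fn n).comap (fun v : Fin n →₀ ℕ => (v : Fin n → ℕ))
    exact h.mono (fun a b h' => Finsupp.le_def.mpr h')
  have h2 := h1.prod (perf_eq (Q := Fin r))
  exact h2.mono (fun a b h => ⟨h.2, h.1⟩)

end AntichainAux

/-- A submodule of the free module `Fin r → ℂ[x₁,…,xₙ]` is *monomial* if it is generated by
elements of the form `x^α · e_i`. -/
def IsMonomialSubmodule (n r : ℕ)
    (N : Submodule (MvPolynomial (Fin n) ℂ) (Fin r → MvPolynomial (Fin n) ℂ)) : Prop :=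
  ∃ G : Set ((Fin n →₀ ℕ) × Fin r),
    N = Submodule.span (MvPolynomial (Fin n) ℂ)
      ((fun p : (Fin n →₀ ℕ) × Fin r =>
        Pi.single p.2 (MvPolynomial.monomial p.1 (1 : ℂ))) '' G)

/-- Every antichain of monomial submodules of `M = ⊕_{i=1}^r S·e_i`, `S = ℂ[x₁,…,xₙ]`,
is finite. -/
theorem antichain_of_monomial_submodules_finite (n r : ℕ)
    (ℰ : Set (Submodule (MvPolynomial (Fin n) ℂ) (Fin r → MvPolynomial (Fin n) ℂ)))
    (hmono : ∀ N ∈ ℰ, IsMonomialSubmodule n r N)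
    (hanti : ∀ N₁ ∈ ℰ, ∀ N₂ ∈ ℰ, N₁ ≠ N₂ → ¬ N₁ ≤ N₂) :
    ℰ.Finite := by
  classical
  by_contra hfin
  have hinf : ℰ.Infinite := hfin
  let e := hinf.natEmbedding
  set N : ℕ → Submodule (MvPolynomial (Fin n) ℂ) (Fin r → MvPolynomial (Fin n) ℂ) :=
    fun k => (e k : Submodule _ _) with hN
  have hNmem : ∀ k, N k ∈ ℰ := fun k => (e k).2
  have hNe : ∀ i j : ℕ, i ≠ j → N i ≠ N j := by
    intro i j hij h
    exact hij (e.injective (Subtype.ext h))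
  have hG : ∀ k, ∃ G : Set ((Fin n →₀ ℕ) × Fin r),
      N k = Submodule.span (MvPolynomial (Fin n) ℂ)
        ((fun p : (Fin n →₀ ℕ) × Fin r =>
          Pi.single p.2 (MvPolynomial.monomial p.1 (1 : ℂ))) '' G) :=
    fun k => hmono (N k) (hNmem k)
  choose G hGspec using hG
  -- the divisibility bridge
  have bridge : ∀ i j : ℕ,
      (∀ q ∈ G j, ∃ p ∈ G i, p.2 = q.2 ∧ p.1 ≤ q.1) → N j ≤ N i := by
    intro i j h
    rw [hGspec j, hGspec i, Submodule.span_le]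
    rintro _ ⟨q, hq, rfl⟩
    obtain ⟨p, hp, he, hle⟩ := h q hq
    have key : (Pi.single q.2 (MvPolynomial.monomial q.1 (1 : ℂ)) :
          Fin r → MvPolynomial (Fin n) ℂ) =
        (MvPolynomial.monomial (q.1 - p.1) (1 : ℂ)) •
          (Pi.single p.2 (MvPolynomial.monomial p.1 (1 : ℂ)) :
            Fin r → MvPolynomial (Fin n) ℂ) := by
      rw [← Pi.single_smul, ← he]
      rw [smul_eq_mul, MvPolynomial.monomial_mul, one_mul, tsub_add_cancel_of_le hle]
    show (Pi.single q.2 (MvPolynomial.monomial q.1 (1 : ℂ)) : Fin r → MvPolynomial (Fin n) ℂ) ∈ _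
    rw [key]
    exact Submodule.smul_mem _ _ (Submodule.subset_span ⟨p, hp, rfl⟩)
  -- nonemptiness of `Fin r`
  have hr : Nonempty (Fin r) := by
    by_contra hk
    rw [not_nonempty_iff] at hk
    have hsub : Subsingleton (Fin r → MvPolynomial (Fin n) ℂ) :=
      ⟨fun a b => funext fun i => hk.elim i⟩
    refine hNe 0 1 (by norm_num) ?_
    ext x
    have hx : x = 0 := Subsingleton.elim x 0
    subst hx
    exact iff_of_true (zero_mem _) (zero_mem _)
  -- witnesses against containment
  have wit : ∀ i j : ℕ, i ≠ j →
      ∃ q, q ∈ G j ∧ ∀ p ∈ G i, ¬ (p.2 = q.2 ∧ p.1 ≤ q.1) := by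
    intro i j hij
    have hn : ¬ N j ≤ N i := hanti (N j) (hNmem j) (N i) (hNmem i) (hNe j i hij.symm)
    by_contra h
    push_neg at h
    refine hn (bridge i j ?_)
    intro q hq
    obtain ⟨p, hp, hpq⟩ := h q hq
    exact ⟨p, hp, hpq⟩
  let d : (Fin n →₀ ℕ) × Fin r := (0, Classical.arbitrary _)
  let f : ℕ → ℕ → (Fin n →₀ ℕ) × Fin r :=
    fun i j => if h : i < j then (wit i j h.ne).choose else d
  have hf : ∀ i j (h : i < j), f i j = (wit i j h.ne).choose := fun i j h => dif_pos h
  obtain ⟨g, hg, hgood⟩ := AntichainAux.perf_main n r f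
  have h01 : g 0 < g 1 := hg (by norm_num)
  have h12 : g 1 < g 2 := hg (by norm_num)
  have hR := hgood 0 1 2 (by norm_num) (by norm_num)
  rw [hf _ _ h01, hf _ _ h12] at hR
  have hq1 := (wit (g 0) (g 1) h01.ne).choose_spec
  have hq2 := (wit (g 1) (g 2) h12.ne).choose_spec
  exact hq2.2 _ hq1.1 hR
end

section
/- The map sending ψ to the set K_ψ := {(n, m, m') ∈ M × M × M : (n, m) ∈ L_φ and m' + N = ψ(n, m)} is a bijection from the set of A-linear homomorphisms ψ : L_φ → M/N satisfying ψ(0, n) = φ(n) for all n ∈ N, onto the set of A-submodules K of M × M × M satisfying: (i) e'(K) ⊆ K, where e' : M × M × M → M × M × M is the A-linear map (m₁, m₂, m₃) ↦ (0, m₁, m₂); (ii) the image of K under the projection onto the first two factors equals L_φ; (iii) K ∩ ({0} × {0} × M) = {0} × {0} × N. -/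
/-! `K_ψ` is the preimage under `(m₁, m₂, m₃) ↦ ((m₁, m₂), m₃ + N)` of the graph of `ψ`. Conversely,
if `K` projects onto `L` and meets the kernel `{0} × {0} × M` of the projection in `{0} × {0} × N`,
then `p ↦ p₃ + N` on `K` factors through the surjection `K → L`, giving `ψ` with `K ≤ K_ψ`; the
modular law turns this into equality, since both have the same image and the same intersection
with the kernel. Finally `e'(n, m, m') = (0, n, m)` with `m + N = φ(n)` for `(n, m) ∈ L_φ`, so
`e'(K_ψ) ⊆ K_ψ` says exactly that `ψ(0, n) = φ(n)`. -/

open Submodule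

theorem LinearMap.exists_comp_eq_of_surjective_of_ker_le {R M M₂ M₃ : Type*} [Ring R]
    [AddCommGroup M] [Module R M] [AddCommGroup M₂] [Module R M₂] [AddCommGroup M₃] [Module R M₃]
    {f : M →ₗ[R] M₂} {g : M →ₗ[R] M₃} (hf : Function.Surjective f) (hfg : ker f ≤ ker g) :
    ∃ h : M₂ →ₗ[R] M₃, h ∘ₗ f = g :=
  ⟨(ker f).liftQ g hfg ∘ₗ (f.quotKerEquivOfSurjective hf).symm.toLinearMap, by ext; simp⟩

namespace SecondOrderDeformation

variable {A : Type*} [Ring A] {M₁ M₂ M₃ : Type*} [AddCommGroup M₁] [Module A M₁]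
  [AddCommGroup M₂] [Module A M₂] [AddCommGroup M₃] [Module A M₃]

variable (A M₁ M₂ M₃) in
abbrev proj12 : M₁ × M₂ × M₃ →ₗ[A] M₁ × M₂ :=
  (LinearMap.fst A M₁ (M₂ × M₃)).prod
    ((LinearMap.fst A M₂ M₃).comp (LinearMap.snd A M₁ (M₂ × M₃)))

theorem ker_proj12 :
    LinearMap.ker (proj12 A M₁ M₂ M₃) = Submodule.prod ⊥ (Submodule.prod ⊥ ⊤) := by
  ext ⟨x, y, z⟩
  simp

variable {L : Submodule A (M₁ × M₂)} {N : Submodule A M₃}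

variable (L N) in
def quotGraph (ψ : L →ₗ[A] M₃ ⧸ N) : Submodule A (M₁ × M₂ × M₃) where
  carrier := {p | ∃ h : (p.1, p.2.1) ∈ L, (Submodule.Quotient.mk p.2.2 : M₃ ⧸ N) = ψ ⟨_, h⟩}
  add_mem' := by
    rintro p q ⟨hp, hψp⟩ ⟨hq, hψq⟩
    exact ⟨L.add_mem hp hq, by simp [hψp, hψq, ← map_add]⟩
  zero_mem' := ⟨L.zero_mem, (Submodule.Quotient.mk_zero N).trans (map_zero ψ).symm⟩
  smul_mem' := by
    rintro c p ⟨hp, hψp⟩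
    exact ⟨L.smul_mem c hp, by simp [hψp, ← map_smul]⟩

theorem mem_quotGraph {ψ : L →ₗ[A] M₃ ⧸ N} {p : M₁ × M₂ × M₃} :
    p ∈ quotGraph L N ψ ↔
      ∃ h : (p.1, p.2.1) ∈ L, (Submodule.Quotient.mk p.2.2 : M₃ ⧸ N) = ψ ⟨_, h⟩ :=
  Iff.rfl

theorem exists_mem_quotGraph (ψ : L →ₗ[A] M₃ ⧸ N) (l : L) :
    ∃ m, (l.1.1, l.1.2, m) ∈ quotGraph L N ψ := by
  obtain ⟨m, hm⟩ := Submodule.Quotient.mk_surjective N (ψ l)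
  exact ⟨m, l.2, hm⟩

theorem map_proj12_quotGraph (ψ : L →ₗ[A] M₃ ⧸ N) :
    (quotGraph L N ψ).map (proj12 A M₁ M₂ M₃) = L := by
  refine le_antisymm ?_ fun l hl ↦ ?_
  · rintro _ ⟨p, ⟨hp, -⟩, rfl⟩
    exact hp
  · obtain ⟨m, hm⟩ := exists_mem_quotGraph ψ ⟨l, hl⟩
    exact ⟨_, hm, rfl⟩

theorem quotGraph_inf_ker (ψ : L →ₗ[A] M₃ ⧸ N) :
    quotGraph L N ψ ⊓ Submodule.prod ⊥ (Submodule.prod ⊥ ⊤) =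
      Submodule.prod ⊥ (Submodule.prod ⊥ N) := by
  ext ⟨x, y, z⟩
  simp only [mem_inf, mem_quotGraph, mem_prod, mem_bot, mem_top, and_true]
  constructor
  · rintro ⟨⟨_, hz⟩, rfl, rfl⟩
    exact ⟨rfl, rfl, (Submodule.Quotient.mk_eq_zero N).1 (hz.trans (map_zero ψ))⟩
  · rintro ⟨rfl, rfl, hz⟩
    refine ⟨⟨L.zero_mem, ?_⟩, rfl, rfl⟩
    exact ((Submodule.Quotient.mk_eq_zero N).2 hz).trans (map_zero ψ).symm

theorem quotGraph_injective : Function.Injective (quotGraph L N) := by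
  intro ψ₁ ψ₂ h
  ext l
  obtain ⟨m, hm⟩ := exists_mem_quotGraph ψ₁ l
  have hm₂ : _ ∈ quotGraph L N ψ₂ := h ▸ hm
  exact hm.2.symm.trans hm₂.2

theorem exists_le_quotGraph {K : Submodule A (M₁ × M₂ × M₃)}
    (hK : K.map (proj12 A M₁ M₂ M₃) = L)
    (hKN : K ⊓ Submodule.prod ⊥ (Submodule.prod ⊥ ⊤) ≤ Submodule.prod ⊥ (Submodule.prod ⊥ N)) :
    ∃ ψ, K ≤ quotGraph L N ψ := by
  have mem_L : ∀ p ∈ K, (p.1, p.2.1) ∈ L := fun p hp ↦ hK ▸ mem_map_of_mem hp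
  let f : K →ₗ[A] L := ((proj12 A M₁ M₂ M₃).comp K.subtype).codRestrict L fun k ↦ mem_L k k.2
  let g : K →ₗ[A] M₃ ⧸ N :=
    N.mkQ ∘ₗ LinearMap.snd A M₂ M₃ ∘ₗ LinearMap.snd A M₁ (M₂ × M₃) ∘ₗ K.subtype
  have hf : Function.Surjective f := by
    rintro ⟨l, hl⟩
    rw [← hK] at hl
    obtain ⟨p, hp, rfl⟩ := hl
    exact ⟨⟨p, hp⟩, rfl⟩
  have hfg : LinearMap.ker f ≤ LinearMap.ker g := by
    intro k hk
    have hk : k.1 ∈ K ⊓ Submodule.prod ⊥ (Submodule.prod ⊥ ⊤) := by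
      rw [← ker_proj12]
      exact ⟨k.2, congrArg Subtype.val hk⟩
    simpa [g] using (hKN hk).2.2
  obtain ⟨ψ, hψ⟩ := LinearMap.exists_comp_eq_of_surjective_of_ker_le hf hfg
  exact ⟨ψ, fun p hp ↦ ⟨mem_L p hp, (LinearMap.congr_fun hψ ⟨p, hp⟩).symm⟩⟩

theorem exists_quotGraph_eq {K : Submodule A (M₁ × M₂ × M₃)}
    (hK : K.map (proj12 A M₁ M₂ M₃) = L)
    (hKN : K ⊓ Submodule.prod ⊥ (Submodule.prod ⊥ ⊤) = Submodule.prod ⊥ (Submodule.prod ⊥ N)) :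
    ∃ ψ, quotGraph L N ψ = K := by
  obtain ⟨ψ, hle⟩ := exists_le_quotGraph hK hKN.le
  refine ⟨ψ, (eq_of_le_of_inf_le_of_sup_le (z := LinearMap.ker (proj12 A M₁ M₂ M₃))
    hle ?_ ?_).symm⟩
  · rw [ker_proj12, quotGraph_inf_ker, hKN]
  · rw [← comap_map_eq, ← comap_map_eq, map_proj12_quotGraph, hK]

theorem shift_mem_quotGraph_iff {M : Type*} [AddCommGroup M] [Module A M] {N : Submodule A M}
    {φ : N →ₗ[A] M ⧸ N} {L : Submodule A (M × M)}
    (hL : ∀ p : M × M, p ∈ L ↔ ∃ h : p.1 ∈ N, (Submodule.Quotient.mk p.2 : M ⧸ N) = φ ⟨p.1, h⟩)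
    (ψ : L →ₗ[A] M ⧸ N) :
    (∀ p ∈ quotGraph L N ψ, ((0 : M), p.1, p.2.1) ∈ quotGraph L N ψ) ↔
      ∀ (n : M) (hn : n ∈ N) (hm : ((0 : M), n) ∈ L), ψ ⟨((0 : M), n), hm⟩ = φ ⟨n, hn⟩ := by
  constructor
  · intro hshift n hn hm
    obtain ⟨m, hφ⟩ := Submodule.Quotient.mk_surjective N (φ ⟨n, hn⟩)
    obtain ⟨m', hm'⟩ := exists_mem_quotGraph ψ ⟨_, (hL (n, m)).2 ⟨hn, hφ⟩⟩
    exact (hshift _ hm').2.symm.trans hφ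
  · rintro hψ p ⟨hp, -⟩
    obtain ⟨hp₁, hφ⟩ := (hL _).1 hp
    have h0 : ((0 : M), p.1) ∈ L :=
      (hL _).2 ⟨N.zero_mem, ((Submodule.Quotient.mk_eq_zero N).2 hp₁).trans (map_zero φ).symm⟩
    exact ⟨h0, hφ.trans (hψ _ hp₁ h0).symm⟩

end SecondOrderDeformation

open SecondOrderDeformation

/-- Given `φ : N → M/N` with first-order deformation `L = L_φ ⊆ M × M`, the map
`ψ ↦ K_ψ := {(n, m, m') : (n, m) ∈ L_φ, m' + N = ψ(n, m)}` is a bijection from the set of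
`A`-linear maps `ψ : L_φ → M/N` with `ψ(0, n) = φ(n)` for all `n ∈ N`, onto the set of
`A`-submodules `K ⊆ M × M × M` with (i) `e'(K) ⊆ K` where `e'(m₁, m₂, m₃) = (0, m₁, m₂)`,
(ii) the projection onto the first two factors maps `K` onto `L_φ`, and
(iii) `K ∩ ({0} × {0} × M) = {0} × {0} × N`. -/
theorem secondOrderDeformations_bijection
    (A : Type) [CommRing A] (M : Type) [AddCommGroup M] [Module A M]
    (N : Submodule A M) (φ : N →ₗ[A] M ⧸ N) (L : Submodule A (M × M))
    (hL : (L : Set (M × M)) =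
      {p : M × M | ∃ h : p.1 ∈ N,
        (Submodule.Quotient.mk p.2 : M ⧸ N) = φ ⟨p.1, h⟩}) :
    ∃ F : {ψ : L →ₗ[A] M ⧸ N //
            ∀ (n : M) (hn : n ∈ N) (hm : ((0 : M), n) ∈ L),
              ψ ⟨((0 : M), n), hm⟩ = φ ⟨n, hn⟩} →
          Submodule A (M × M × M),
      (∀ ψ, (F ψ : Set (M × M × M)) =
        {p : M × M × M | ∃ h : (p.1, p.2.1) ∈ L,
          (Submodule.Quotient.mk p.2.2 : M ⧸ N) = ψ.1 ⟨(p.1, p.2.1), h⟩}) ∧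
      (∀ ψ,
        (∀ p ∈ F ψ, ((0 : M), p.1, p.2.1) ∈ F ψ) ∧
        Submodule.map
          (LinearMap.prod (LinearMap.fst A M (M × M))
            ((LinearMap.fst A M M).comp (LinearMap.snd A M (M × M)))) (F ψ) = L ∧
        F ψ ⊓ Submodule.prod ⊥ (Submodule.prod ⊥ ⊤) =
          Submodule.prod ⊥ (Submodule.prod ⊥ N)) ∧
      Function.Injective F ∧
      (∀ K : Submodule A (M × M × M),
        (∀ p ∈ K, ((0 : M), p.1, p.2.1) ∈ K) →
        Submodule.map
          (LinearMap.prod (LinearMap.fst A M (M × M))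
            ((LinearMap.fst A M M).comp (LinearMap.snd A M (M × M)))) K = L →
        K ⊓ Submodule.prod ⊥ (Submodule.prod ⊥ ⊤) =
          Submodule.prod ⊥ (Submodule.prod ⊥ N) →
        ∃ ψ, F ψ = K) := by
  have hmem : ∀ p : M × M, p ∈ L ↔ ∃ h : p.1 ∈ N,
      (Submodule.Quotient.mk p.2 : M ⧸ N) = φ ⟨p.1, h⟩ := Set.ext_iff.1 hL
  refine ⟨fun ψ ↦ quotGraph L N ψ.1, fun ψ ↦ rfl,
    fun ψ ↦ ⟨(shift_mem_quotGraph_iff hmem ψ.1).2 ψ.2, map_proj12_quotGraph ψ.1,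
      quotGraph_inf_ker ψ.1⟩, quotGraph_injective.comp Subtype.val_injective, ?_⟩
  intro K hshift hK hKN
  obtain ⟨ψ, rfl⟩ := exists_quotGraph_eq hK hKN
  exact ⟨⟨ψ, (shift_mem_quotGraph_iff hmem ψ).1 hshift⟩, rfl⟩
end
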